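/- If Λ = {Λ_i ∈ B(X, Y_i)} is a qg-Riesz basis for X^* with respect to {Y_i}, then Λ is a pg-frame for X with respect to {Y_i}. -/

import Mathlib

/-!
The analysis operator `U x = (Λᵢ x)ᵢ` is bounded into `ℓ^p`: testing the upper Riesz bound on
`gᵢ = ‖Λᵢ x‖^(p-1) • φᵢ`, with `φᵢ` a norming functional of `Λᵢ x`, gives
`∑ ‖Λᵢ x‖^p ≤ B ‖x‖ (∑ ‖Λᵢ x‖^p)^(1/q)`.

A functional `G` on `ℓ^p` is determined by its components `gᵢ = G ∘ singleᵢ`, with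
`‖G‖ = ‖(‖gᵢ‖)ᵢ‖_q`, and `G ∘ U = ∑ Λᵢ^* gᵢ`; so the lower Riesz bound reads `A ‖G‖ ≤ ‖G ∘ U‖`.
By Hahn–Banach, this puts every `w` in the closure of the image of the ball of radius `‖w‖ / A`,
and the iteration from the proof of the open mapping theorem then yields an exact preimage of norm
at most `2 ‖w‖ / A`. Completeness of `Λ` makes `U` injective, which gives the lower frame bound
`A / 2`.
-/

open NormedSpace Filter

/-- The Banach-space adjoint (dual map) of a continuous linear map. -/
noncomputable def opAdj {X Y : Type*} [NormedAddCommGroup X] [NormedSpace ℝ X]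
    [NormedAddCommGroup Y] [NormedSpace ℝ Y] (T : X →L[ℝ] Y) :
    StrongDual ℝ Y →L[ℝ] StrongDual ℝ X :=
  (ContinuousLinearMap.compL ℝ X Y ℝ).flip T

theorem opAdj_apply {X Y : Type*} [NormedAddCommGroup X] [NormedSpace ℝ X]
    [NormedAddCommGroup Y] [NormedSpace ℝ Y] (T : X →L[ℝ] Y) (g : StrongDual ℝ Y) :
    opAdj T g = g.comp T :=
  rfl

namespace Real.HolderConjugate

variable {p q : ℝ}

theorem le_rpow_of_le_mul_rpow (hpq : p.HolderConjugate q) {S c : ℝ} (hS : 0 ≤ S) (hc : 0 ≤ c)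
    (h : S ≤ c * S ^ (1 / q)) : S ≤ c ^ p := by
  rcases hS.eq_or_lt with rfl | hS
  · exact Real.rpow_nonneg hc p
  have hsplit : S = S ^ (1 / p) * S ^ (1 / q) := by
    rw [← Real.rpow_add hS, one_div, one_div, hpq.inv_add_inv_eq_one, Real.rpow_one]
  have hroot : S ^ (1 / p) ≤ c := by
    refine le_of_mul_le_mul_right ?_ (Real.rpow_pos_of_pos hS (1 / q))
    rwa [← hsplit]
  calc S = (S ^ (1 / p)) ^ p := by
        rw [← Real.rpow_mul hS.le, one_div_mul_cancel hpq.ne_zero, Real.rpow_one]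
    _ ≤ c ^ p := Real.rpow_le_rpow (Real.rpow_nonneg hS.le _) hroot hpq.nonneg

end Real.HolderConjugate

section NormingFunctionals

variable {E : Type*} [NormedAddCommGroup E] [NormedSpace ℝ E] {p q : ℝ}

theorem exists_dual_apply_eq_norm_rpow (hpq : p.HolderConjugate q) (y : E) :
    ∃ g : StrongDual ℝ E, ‖g‖ ^ q ≤ ‖y‖ ^ p ∧ g y = ‖y‖ ^ p := by
  obtain ⟨f, hf, hfy⟩ := exists_dual_vector'' ℝ y
  refine ⟨‖y‖ ^ (p - 1) • f, ?_, ?_⟩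
  · have hg : ‖‖y‖ ^ (p - 1) • f‖ ≤ ‖y‖ ^ (p - 1) := by
      rw [norm_smul, Real.norm_of_nonneg (by positivity)]
      exact mul_le_of_le_one_right (by positivity) hf
    calc ‖‖y‖ ^ (p - 1) • f‖ ^ q ≤ (‖y‖ ^ (p - 1)) ^ q := by gcongr; exact hpq.symm.nonneg
      _ = ‖y‖ ^ p := by rw [← Real.rpow_mul (norm_nonneg y), hpq.sub_one_mul_conj]
  · rw [_root_.smul_apply, hfy, smul_eq_mul, RCLike.ofReal_real_eq_id, id,
      ← Real.rpow_add_one' (norm_nonneg y) (by simpa using hpq.ne_zero), sub_add_cancel]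

theorem exists_norm_rpow_le_and_sub_le_apply (hpq : p.HolderConjugate q) (g : StrongDual ℝ E)
    {ε : ℝ} (hε : 0 < ε) : ∃ y : E, ‖y‖ ^ p ≤ ‖g‖ ^ q ∧ ‖g‖ ^ q - ε ≤ g y := by
  rcases (norm_nonneg g).eq_or_lt with hg | hg
  · exact ⟨0, by simp [← hg, Real.zero_rpow hpq.ne_zero, Real.zero_rpow hpq.symm.ne_zero, hε.le]⟩
  set t := ‖g‖ ^ (q - 1)
  have ht : 0 < t := Real.rpow_pos_of_pos hg _
  obtain ⟨y, hy, hgy⟩ : ∃ y : E, ‖y‖ ≤ 1 ∧ ‖g‖ - ε / t ≤ g y := by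
    obtain ⟨y, hy, hgy⟩ := g.exists_lt_apply_of_lt_opNorm (sub_lt_self ‖g‖ (div_pos hε ht))
    rcases le_total 0 (g y) with hy0 | hy0
    · exact ⟨y, hy.le, by rw [Real.norm_of_nonneg hy0] at hgy; exact hgy.le⟩
    · exact ⟨-y, by simpa using hy.le, by rw [Real.norm_of_nonpos hy0] at hgy; simpa using hgy.le⟩
  refine ⟨t • y, ?_, ?_⟩
  · calc ‖t • y‖ ^ p ≤ t ^ p := by
          gcongr
          · exact hpq.nonneg
          · rw [norm_smul, Real.norm_of_nonneg ht.le]; exact mul_le_of_le_one_right ht.le hy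
      _ = ‖g‖ ^ q := by rw [← Real.rpow_mul (norm_nonneg g), hpq.symm.sub_one_mul_conj]
  · have htg : t * ‖g‖ = ‖g‖ ^ q := by
      rw [← Real.rpow_add_one hg.ne', sub_add_cancel]
    calc ‖g‖ ^ q - ε = t * (‖g‖ - ε / t) := by rw [mul_sub, htg, mul_div_cancel₀ _ ht.ne']
      _ ≤ t * g y := by gcongr
      _ = g (t • y) := by rw [map_smul, smul_eq_mul]

end NormingFunctionals

namespace lp

open scoped ENNReal

variable {ι : Type*} [DecidableEq ι] {Y : ι → Type*} [∀ i, NormedAddCommGroup (Y i)]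
  [∀ i, NormedSpace ℝ (Y i)] {p : ℝ≥0∞} [Fact (1 ≤ p)] {q : ℝ}

theorem sum_norm_comp_single_rpow_le (hpq : p.toReal.HolderConjugate q)
    (G : StrongDual ℝ (lp Y p)) (s : Finset ι) :
    ∑ i ∈ s, ‖G.comp (singleContinuousLinearMap ℝ Y p i)‖ ^ q ≤ ‖G‖ ^ q := by
  set g := fun i => G.comp (singleContinuousLinearMap ℝ Y p i)
  set S := ∑ i ∈ s, ‖g i‖ ^ q
  have hS : 0 ≤ S := by positivity
  refine hpq.symm.le_rpow_of_le_mul_rpow hS (norm_nonneg G)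
    (le_of_forall_pos_le_add fun ε hε => ?_)
  have hδ : 0 < ε / (s.card + 1) := by positivity
  choose y hy hgy using fun i => exists_norm_rpow_le_and_sub_le_apply hpq (g i) hδ
  set z := ∑ i ∈ s, lp.single p i (y i)
  have hz : ‖z‖ ≤ S ^ (1 / p.toReal) := by
    have hp : 0 < p.toReal := hpq.pos
    rw [← Real.rpow_le_rpow_iff (norm_nonneg z) (by positivity) hp,
      ← Real.rpow_mul hS, one_div_mul_cancel hp.ne', Real.rpow_one, lp.norm_sum_single hp]
    exact Finset.sum_le_sum fun i _ => hy i
  have hGz : S - ε ≤ G z := by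
    have hsum : ∑ i ∈ s, ε / (s.card + 1) ≤ ε := by
      rw [Finset.sum_const, nsmul_eq_mul, mul_div_assoc']
      exact div_le_of_le_mul₀ (by positivity) hε.le (by linarith)
    calc S - ε ≤ ∑ i ∈ s, (‖g i‖ ^ q - ε / (s.card + 1)) := by
          rw [Finset.sum_sub_distrib]; linarith
      _ ≤ ∑ i ∈ s, g i (y i) := Finset.sum_le_sum fun i _ => hgy i
      _ = G z := by simp [z, g, map_sum]
  calc S ≤ G z + ε := by linarith
    _ ≤ ‖G‖ * ‖z‖ + ε := by gcongr; exact (Real.le_norm_self _).trans (G.le_opNorm z)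
    _ ≤ ‖G‖ * S ^ (1 / p.toReal) + ε := by gcongr

theorem hasSum_norm_comp_single_rpow (hpq : p.toReal.HolderConjugate q)
    (G : StrongDual ℝ (lp Y p)) :
    HasSum (fun i => ‖G.comp (singleContinuousLinearMap ℝ Y p i)‖ ^ q) (‖G‖ ^ q) := by
  set g := fun i => G.comp (singleContinuousLinearMap ℝ Y p i)
  have hp : 0 < p.toReal := hpq.pos
  have hsum : Summable fun i => ‖g i‖ ^ q :=
    summable_of_sum_le (fun i => by positivity) (sum_norm_comp_single_rpow_le hpq G)
  refine hsum.hasSum_iff.mpr (le_antisymm (hsum.tsum_le_of_sum_le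
    (sum_norm_comp_single_rpow_le hpq G)) ?_)
  set T := ∑' i, ‖g i‖ ^ q
  have hT : 0 ≤ T := tsum_nonneg fun i => by positivity
  suffices hG : ‖G‖ ≤ T ^ (1 / q) by
    calc ‖G‖ ^ q ≤ (T ^ (1 / q)) ^ q := by gcongr; exact hpq.symm.nonneg
      _ = T := by rw [← Real.rpow_mul hT, one_div_mul_cancel hpq.symm.ne_zero, Real.rpow_one]
  refine G.opNorm_le_bound (by positivity) fun z => ?_
  have hz : Summable fun i => ‖z i‖ ^ p.toReal := (lp.memℓp z).summable hp
  have hGz : HasSum (fun i => g i (z i)) (G z) :=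
    (lp.hasSum_single (ENNReal.toReal_pos_iff.mp hp).2.ne z).mapL G
  calc ‖G z‖ ≤ ∑' i, ‖g i‖ * ‖z i‖ := by
        rw [← hGz.tsum_eq]
        exact tsum_of_norm_bounded (Real.summable_mul_of_Lp_Lq_of_nonneg hpq.symm
          (fun _ => norm_nonneg _) (fun _ => norm_nonneg _) hsum hz).hasSum
          fun i => (g i).le_opNorm (z i)
    _ ≤ T ^ (1 / q) * (∑' i, ‖z i‖ ^ p.toReal) ^ (1 / p.toReal) :=
        Real.inner_le_Lp_mul_Lq_tsum_of_nonneg hpq.symm (fun _ => norm_nonneg _)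
          (fun _ => norm_nonneg _) hsum hz
    _ = T ^ (1 / q) * ‖z‖ := by rw [lp.norm_eq_tsum_rpow hp]

theorem sub_sum_comp_evalCLM_comp_single (G : StrongDual ℝ (lp Y p)) (s : Finset ι) (j : ι) :
    (G - ∑ i ∈ s, (G.comp (singleContinuousLinearMap ℝ Y p i)).comp (evalCLM ℝ Y p i)).comp
        (singleContinuousLinearMap ℝ Y p j) =
      if j ∈ s then 0 else G.comp (singleContinuousLinearMap ℝ Y p j) := by
  ext a
  have hterm : ∀ i ≠ j, G (lp.single p i (lp.single p j a i)) = 0 := fun i hij => by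
    rw [lp.single_apply_ne p j a hij, lp.single_zero, map_zero]
  simp only [ContinuousLinearMap.comp_apply, _root_.sub_apply, _root_.sum_apply,
    singleContinuousLinearMap_apply, evalCLM, LinearMap.mkContinuous_apply, evalₗ_apply]
  by_cases hj : j ∈ s
  · rw [Finset.sum_eq_single_of_mem j hj fun i _ => hterm i, lp.single_apply_self, if_pos hj,
      sub_self, _root_.zero_apply]
  · rw [Finset.sum_eq_zero fun i hi => hterm i (ne_of_mem_of_not_mem hi hj), if_neg hj, sub_zero,
      ContinuousLinearMap.comp_apply, singleContinuousLinearMap_apply]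

theorem norm_sub_sum_comp_evalCLM_rpow (hpq : p.toReal.HolderConjugate q)
    (G : StrongDual ℝ (lp Y p)) (s : Finset ι) :
    ‖G - ∑ i ∈ s, (G.comp (singleContinuousLinearMap ℝ Y p i)).comp (evalCLM ℝ Y p i)‖ ^ q =
      ‖G‖ ^ q - ∑ i ∈ s, ‖G.comp (singleContinuousLinearMap ℝ Y p i)‖ ^ q := by
  have hcomp : ∀ j, ‖(G - ∑ i ∈ s, (G.comp (singleContinuousLinearMap ℝ Y p i)).comp
      (evalCLM ℝ Y p i)).comp (singleContinuousLinearMap ℝ Y p j)‖ ^ q =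
      ‖G.comp (singleContinuousLinearMap ℝ Y p j)‖ ^ q -
        if j ∈ s then ‖G.comp (singleContinuousLinearMap ℝ Y p j)‖ ^ q else 0 := by
    intro j
    rw [sub_sum_comp_evalCLM_comp_single]
    split_ifs
    · simp [Real.zero_rpow hpq.symm.ne_zero]
    · rw [sub_zero]
  refine (hasSum_norm_comp_single_rpow hpq _).unique ?_
  simp_rw [hcomp]
  refine (hasSum_norm_comp_single_rpow hpq G).sub ?_
  simpa using hasSum_sum_of_ne_finset_zero (s := s) fun j (hj : j ∉ s) =>
    if_neg hj (t := ‖G.comp (singleContinuousLinearMap ℝ Y p j)‖ ^ q) (e := 0)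

end lp

namespace ContinuousLinearMap

theorem exists_preimage_norm_le_of_approx {𝕜 E F : Type*} [NontriviallyNormedField 𝕜]
    [NormedAddCommGroup E] [NormedSpace 𝕜 E] [CompleteSpace E]
    [NormedAddCommGroup F] [NormedSpace 𝕜 F] (T : E →L[𝕜] F) {C : ℝ} (hC : 0 ≤ C)
    (hT : ∀ w, ∃ x, ‖x‖ ≤ C * ‖w‖ ∧ ‖w - T x‖ ≤ ‖w‖ / 2) (w : F) :
    ∃ x, T x = w ∧ ‖x‖ ≤ 2 * C * ‖w‖ := by
  choose g hg_norm hg_err using hT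
  set r : ℕ → F := fun n => (fun v => v - T (g v))^[n] w
  have hr_succ : ∀ n, r (n + 1) = r n - T (g (r n)) := fun n =>
    Function.iterate_succ_apply' _ n w
  have hr : ∀ n, ‖r n‖ ≤ (1 / 2) ^ n * ‖w‖ := by
    intro n
    induction n with
    | zero => simp [r]
    | succ n ih =>
      rw [hr_succ, pow_succ]
      linarith [hg_err (r n)]
  have hu : ∀ n, ‖g (r n)‖ ≤ (1 / 2) ^ n * (C * ‖w‖) := fun n => by
    nlinarith [hg_norm (r n), hr n]
  have hgeom := hasSum_geometric_two.mul_right (C * ‖w‖)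
  have hsum : Summable fun n => g (r n) := .of_norm_bounded hgeom.summable hu
  refine ⟨∑' n, g (r n), ?_, by simpa [mul_assoc] using tsum_of_norm_bounded hgeom hu⟩
  have hpartial : ∀ n, ∑ k ∈ Finset.range n, T (g (r k)) = w - r n := fun n => by
    simpa [hr_succ, r] using Finset.sum_range_sub' r n
  have hr_lim : Tendsto r atTop (nhds 0) := squeeze_zero_norm hr <| by
    simpa using (tendsto_pow_atTop_nhds_zero_of_lt_one (by norm_num) one_half_lt_one).mul_const ‖w‖
  refine tendsto_nhds_unique (hsum.hasSum.mapL T).tendsto_sum_nat ?_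
  simpa [hpartial] using tendsto_const_nhds.sub hr_lim

variable {E F : Type*} [NormedAddCommGroup E] [NormedSpace ℝ E]
  [NormedAddCommGroup F] [NormedSpace ℝ F]

theorem mem_closure_image_closedBall_of_dual_bound (T : E →L[ℝ] F) {A : ℝ} (hA : 0 < A)
    (hT : ∀ G : StrongDual ℝ F, A * ‖G‖ ≤ ‖G.comp T‖) (w : F) :
    w ∈ closure (T '' Metric.closedBall 0 (‖w‖ / A)) := by
  rcases eq_or_ne w 0 with rfl | hw
  · exact subset_closure ⟨0, by simp, map_zero T⟩
  set r := ‖w‖ / A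
  have hr : 0 < r := div_pos (norm_pos_iff.mpr hw) hA
  by_contra hwK
  obtain ⟨G, u, hGK, hGw⟩ := geometric_hahn_banach_closed_point
    ((convex_closedBall 0 r).linear_image T.toLinearMap).closure isClosed_closure hwK
  have hGT : ∀ x ∈ Metric.closedBall (0 : E) r, ‖G.comp T x‖ ≤ u := fun x hx => by
    have h₁ := hGK _ (subset_closure (Set.mem_image_of_mem T hx))
    have h₂ := hGK _ (subset_closure (Set.mem_image_of_mem T (by simpa using hx : -x ∈ _)))
    rw [map_neg, map_neg] at h₂
    rw [comp_apply, Real.norm_eq_abs, abs_le]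
    constructor <;> linarith
  have hGu : ‖G‖ * ‖w‖ ≤ u := by
    have h := (hT G).trans (opNorm_bound_of_ball_bound hr u _ hGT)
    rw [le_div_iff₀ hr] at h
    calc ‖G‖ * ‖w‖ = A * ‖G‖ * r := by simp only [r]; field_simp
      _ ≤ u := h
  linarith [(Real.le_norm_self _).trans (G.le_opNorm w)]

theorem half_mul_norm_le_norm_apply_of_dual_bound [CompleteSpace E] (T : E →L[ℝ] F)
    (hinj : Function.Injective T) {A : ℝ} (hA : 0 < A)
    (hT : ∀ G : StrongDual ℝ F, A * ‖G‖ ≤ ‖G.comp T‖) (x : E) : A / 2 * ‖x‖ ≤ ‖T x‖ := by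
  have happrox (w : F) : ∃ y, ‖y‖ ≤ A⁻¹ * ‖w‖ ∧ ‖w - T y‖ ≤ ‖w‖ / 2 := by
    rcases eq_or_ne w 0 with rfl | hw
    · exact ⟨0, by simp⟩
    obtain ⟨_, ⟨y, hy, rfl⟩, hwy⟩ := Metric.mem_closure_iff.mp
      (mem_closure_image_closedBall_of_dual_bound T hA hT w) (‖w‖ / 2) (by positivity)
    refine ⟨y, ?_, by rw [← dist_eq_norm]; exact hwy.le⟩
    simpa [div_eq_inv_mul] using hy
  obtain ⟨y, hy, hyx⟩ := exists_preimage_norm_le_of_approx T (by positivity) happrox (T x)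
  rw [hinj hy] at hyx
  calc A / 2 * ‖x‖ ≤ A / 2 * (2 * A⁻¹ * ‖T x‖) := by gcongr
    _ = ‖T x‖ := by field_simp

end ContinuousLinearMap

section Frames

open scoped ENNReal

variable {X : Type*} [NormedAddCommGroup X] [NormedSpace ℝ X] {ι : Type*} {Y : ι → Type*}
  [∀ i, NormedAddCommGroup (Y i)] [∀ i, NormedSpace ℝ (Y i)]

theorem sum_norm_rpow_le_of_norm_sum_opAdj_le {p q : ℝ} (hpq : p.HolderConjugate q)
    (Λ : ∀ i, X →L[ℝ] Y i) {B : ℝ} (hB : 0 ≤ B)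
    (hΛ : ∀ (s : Finset ι) (g : ∀ i, StrongDual ℝ (Y i)),
      ‖∑ i ∈ s, opAdj (Λ i) (g i)‖ ≤ B * (∑ i ∈ s, ‖g i‖ ^ q) ^ (1 / q))
    (x : X) (s : Finset ι) : ∑ i ∈ s, ‖Λ i x‖ ^ p ≤ (B * ‖x‖) ^ p := by
  choose g hg hgx using fun i => exists_dual_apply_eq_norm_rpow hpq (Λ i x)
  set S := ∑ i ∈ s, ‖Λ i x‖ ^ p
  refine hpq.le_rpow_of_le_mul_rpow (by positivity) (by positivity) ?_
  calc S = (∑ i ∈ s, opAdj (Λ i) (g i)) x := by simp [S, opAdj_apply, hgx]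
    _ ≤ ‖∑ i ∈ s, opAdj (Λ i) (g i)‖ * ‖x‖ :=
        (Real.le_norm_self _).trans (ContinuousLinearMap.le_opNorm _ x)
    _ ≤ B * (∑ i ∈ s, ‖g i‖ ^ q) ^ (1 / q) * ‖x‖ := by gcongr; exact hΛ s g
    _ ≤ B * S ^ (1 / q) * ‖x‖ := by
        gcongr
        · exact hpq.symm.one_div_nonneg
        · exact Finset.sum_le_sum fun i _ => hg i
    _ = B * ‖x‖ * S ^ (1 / q) := by ring

theorem exists_analysisOperator {p : ℝ≥0∞} [Fact (1 ≤ p)] (hp : 0 < p.toReal)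
    (Λ : ∀ i, X →L[ℝ] Y i) {C : ℝ} (hC : 0 ≤ C)
    (hΛ : ∀ (x : X) (s : Finset ι), ∑ i ∈ s, ‖Λ i x‖ ^ p.toReal ≤ (C * ‖x‖) ^ p.toReal) :
    ∃ U : X →L[ℝ] lp Y p, (∀ x i, U x i = Λ i x) ∧ ∀ x, ‖U x‖ ≤ C * ‖x‖ := by
  let U : X →ₗ[ℝ] lp Y p :=
    { toFun x := ⟨fun i => Λ i x, memℓp_gen' (hΛ x)⟩
      map_add' x y := lp.ext <| funext fun i => map_add (Λ i) x y
      map_smul' c x := lp.ext <| funext fun i => map_smul (Λ i) c x }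
  have hU (x : X) : ‖U x‖ ≤ C * ‖x‖ := lp.norm_le_of_forall_sum_le hp (by positivity) (hΛ x)
  exact ⟨U.mkContinuous C hU, fun x i => rfl, hU⟩

theorem mul_norm_le_norm_comp_analysisOperator [DecidableEq ι] {p : ℝ≥0∞} [Fact (1 ≤ p)]
    {q : ℝ} (hpq : p.toReal.HolderConjugate q) (Λ : ∀ i, X →L[ℝ] Y i) (U : X →L[ℝ] lp Y p)
    (hU : ∀ x i, U x i = Λ i x) {A : ℝ}
    (hΛ : ∀ (s : Finset ι) (g : ∀ i, StrongDual ℝ (Y i)),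
      A * (∑ i ∈ s, ‖g i‖ ^ q) ^ (1 / q) ≤ ‖∑ i ∈ s, opAdj (Λ i) (g i)‖)
    (G : StrongDual ℝ (lp Y p)) : A * ‖G‖ ≤ ‖G.comp U‖ := by
  set g := fun i => G.comp (lp.singleContinuousLinearMap ℝ Y p i)
  set N := fun s : Finset ι => ∑ i ∈ s, ‖g i‖ ^ q
  have hq : 0 < 1 / q := hpq.symm.one_div_pos
  have hN : Tendsto N atTop (nhds (‖G‖ ^ q)) := lp.hasSum_norm_comp_single_rpow hpq G
  have hbound (s : Finset ι) :
      A * N s ^ (1 / q) ≤ ‖G.comp U‖ + ‖U‖ * (‖G‖ ^ q - N s) ^ (1 / q) := by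
    -- `Gs` is `G` with its coordinates in `s` removed: `∑ i ∈ s, Λᵢ^* gᵢ = (G - Gs) ∘ U`,
    -- while `‖Gs‖ → 0` along `s`.
    set Gs := G - ∑ i ∈ s, (g i).comp (lp.evalCLM ℝ Y p i)
    have hGs : ‖Gs‖ = (‖G‖ ^ q - N s) ^ (1 / q) := by
      rw [← lp.norm_sub_sum_comp_evalCLM_rpow hpq G s, ← Real.rpow_mul (norm_nonneg _),
        mul_one_div_cancel hpq.symm.ne_zero, Real.rpow_one]
    have hcomp : ∑ i ∈ s, opAdj (Λ i) (g i) = G.comp U - Gs.comp U := by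
      ext x
      simp [Gs, opAdj_apply, hU, lp.evalCLM]
    calc A * N s ^ (1 / q) ≤ ‖G.comp U - Gs.comp U‖ := hcomp ▸ hΛ s g
      _ ≤ ‖G.comp U‖ + ‖Gs‖ * ‖U‖ :=
          (norm_sub_le _ _).trans (by gcongr; exact ContinuousLinearMap.opNorm_comp_le _ _)
      _ = ‖G.comp U‖ + ‖U‖ * (‖G‖ ^ q - N s) ^ (1 / q) := by rw [hGs, mul_comm]
  have hlim_left : Tendsto (fun s => A * N s ^ (1 / q)) atTop (nhds (A * ‖G‖)) := by
    have h := (hN.rpow_const (Or.inr hq.le)).const_mul A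
    rwa [← Real.rpow_mul (norm_nonneg G), mul_one_div_cancel hpq.symm.ne_zero,
      Real.rpow_one] at h
  have hlim_right : Tendsto (fun s => ‖G.comp U‖ + ‖U‖ * (‖G‖ ^ q - N s) ^ (1 / q)) atTop
      (nhds ‖G.comp U‖) := by
    have h := (((tendsto_const_nhds (x := ‖G‖ ^ q)).sub hN).rpow_const (Or.inr hq.le)).const_mul
      ‖U‖
    rw [sub_self, Real.zero_rpow hq.ne', mul_zero] at h
    simpa using (tendsto_const_nhds (x := ‖G.comp U‖)).add h
  exact le_of_tendsto_of_tendsto' hlim_left hlim_right hbound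

end Frames

theorem qgRieszBasis_is_pgFrame_general
    {X : Type*} [NormedAddCommGroup X] [NormedSpace ℝ X] [CompleteSpace X]
    {Y : ℕ → Type*} [∀ i, NormedAddCommGroup (Y i)] [∀ i, NormedSpace ℝ (Y i)]
    (p q : ℝ) (hp : 1 < p) (hpq : 1 / p + 1 / q = 1)
    (Λ : ∀ i, X →L[ℝ] Y i)
    -- (i) g-completeness
    (hcomplete : ∀ x : X, (∀ i, Λ i x = 0) → x = 0)
    -- (ii) the two-sided ℓ^q inequality on finite sums
    (hriesz : ∃ A B : ℝ, 0 < A ∧ 0 < B ∧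
      ∀ (s : Finset ℕ) (g : ∀ i, StrongDual ℝ (Y i)),
        A * (∑ i ∈ s, ‖g i‖ ^ q) ^ (1 / q) ≤ ‖∑ i ∈ s, opAdj (Λ i) (g i)‖ ∧
        ‖∑ i ∈ s, opAdj (Λ i) (g i)‖ ≤ B * (∑ i ∈ s, ‖g i‖ ^ q) ^ (1 / q)) :
    ∃ A' B' : ℝ, 0 < A' ∧ 0 < B' ∧ ∀ x : X, Summable (fun i => ‖Λ i x‖ ^ p) ∧
      A' * ‖x‖ ≤ (∑' i, ‖Λ i x‖ ^ p) ^ (1 / p) ∧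
      (∑' i, ‖Λ i x‖ ^ p) ^ (1 / p) ≤ B' * ‖x‖ := by
  obtain ⟨A, B, hA, hB, hAB⟩ := hriesz
  have hpq' : p.HolderConjugate q := Real.holderConjugate_iff.mpr ⟨hp, by simpa using hpq⟩
  have : Fact (1 ≤ ENNReal.ofReal p) := ⟨ENNReal.one_le_ofReal.mpr hp.le⟩
  have hp' : (ENNReal.ofReal p).toReal = p := ENNReal.toReal_ofReal hpq'.nonneg
  have hpos : 0 < (ENNReal.ofReal p).toReal := by rw [hp']; exact hpq'.pos
  obtain ⟨U, hUΛ, hUB⟩ := exists_analysisOperator hpos Λ hB.le <| by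
    rw [hp']; exact sum_norm_rpow_le_of_norm_sum_opAdj_le hpq' Λ hB.le fun s g => (hAB s g).2
  have hUnorm (x : X) : ‖U x‖ = (∑' i, ‖Λ i x‖ ^ p) ^ (1 / p) := by
    simp [lp.norm_eq_tsum_rpow hpos, hp', hUΛ]
  have hUinj : Function.Injective U := (injective_iff_map_eq_zero U).mpr fun x hx =>
    hcomplete x fun i => by rw [← hUΛ, hx, lp.coeFn_zero, Pi.zero_apply]
  have hUdual := mul_norm_le_norm_comp_analysisOperator (by rwa [hp']) Λ U hUΛ
    fun s g => (hAB s g).1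
  refine ⟨A / 2, B, by positivity, hB, fun x => ⟨?_, ?_, ?_⟩⟩
  · simpa [hp', hUΛ] using (lp.memℓp (U x)).summable hpos
  · exact hUnorm x ▸ U.half_mul_norm_le_norm_apply_of_dual_bound hUinj hA hUdual x
  · exact hUnorm x ▸ hUB x

/-- a qg-Riesz basis for `X*` is a pg-frame for `X`. -/
theorem qgRieszBasis_is_pgFrame
    {X : Type*} [NormedAddCommGroup X] [NormedSpace ℝ X] [CompleteSpace X]
    {Y : ℕ → Type*} [∀ i, NormedAddCommGroup (Y i)] [∀ i, NormedSpace ℝ (Y i)]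
    [∀ i, CompleteSpace (Y i)]
    (p q : ℝ) (hp : 1 < p) (hpq : 1 / p + 1 / q = 1)
    (Λ : ∀ i, X →L[ℝ] Y i)
    -- (i) g-completeness
    (hcomplete : ∀ x : X, (∀ i, Λ i x = 0) → x = 0)
    -- (ii) the two-sided ℓ^q inequality on finite sums
    (hriesz : ∃ A B : ℝ, 0 < A ∧ 0 < B ∧
      ∀ (s : Finset ℕ) (g : ∀ i, StrongDual ℝ (Y i)),
        A * (∑ i ∈ s, ‖g i‖ ^ q) ^ (1 / q) ≤ ‖∑ i ∈ s, opAdj (Λ i) (g i)‖ ∧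
        ‖∑ i ∈ s, opAdj (Λ i) (g i)‖ ≤ B * (∑ i ∈ s, ‖g i‖ ^ q) ^ (1 / q)) :
    ∃ A' B' : ℝ, 0 < A' ∧ 0 < B' ∧ ∀ x : X, Summable (fun i => ‖Λ i x‖ ^ p) ∧
      A' * ‖x‖ ≤ (∑' i, ‖Λ i x‖ ^ p) ^ (1 / p) ∧
      (∑' i, ‖Λ i x‖ ^ p) ^ (1 / p) ≤ B' * ‖x‖ :=
  qgRieszBasis_is_pgFrame_general p q hp hpq Λ hcomplete hriesz
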